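/- If x̂ minimizes the nLasso objective h over ℝ^V and ŷ maximizes the dual objective D over all feasible flows, then |ŷ_e| ≤ λ W_e for every edge e ∈ E, and for every oriented edge e = (i,j) ∈ E with |ŷ_e| < λ W_e it holds that x̂_i = x̂_j. -/

import Mathlib

open Finset

/-- Total variation of a graph signal `x` w.r.t. oriented edge set `E` and weights `W`. -/
noncomputable def TV {n : ℕ} (E : Finset (Fin n × Fin n)) (W : Fin n × Fin n → ℝ)
    (x : Fin n → ℝ) : ℝ :=
  ∑ e ∈ E, W e * |x e.1 - x e.2|

/-- The network Lasso objective. -/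
noncomputable def nLasso {n : ℕ} (E : Finset (Fin n × Fin n)) (W : Fin n × Fin n → ℝ)
    (S : Finset (Fin n)) (α lam : ℝ) (x : Fin n → ℝ) : ℝ :=
  ∑ i ∈ S, (x i - 1) ^ 2 / 2 + ∑ i ∈ Sᶜ, α * x i ^ 2 / 2 + lam * TV E W x

/-- Divergence of the flow `y` at node `i`: outgoing minus incoming flow. -/
noncomputable def divg {n : ℕ} (E : Finset (Fin n × Fin n)) (y : Fin n × Fin n → ℝ)
    (i : Fin n) : ℝ :=
  ∑ e ∈ E.filter (fun e => e.1 = i), y e - ∑ e ∈ E.filter (fun e => e.2 = i), y e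

/-- The dual (flow) objective of the network Lasso. -/
noncomputable def dualObj {n : ℕ} (E : Finset (Fin n × Fin n)) (S : Finset (Fin n))
    (α : ℝ) (y : Fin n × Fin n → ℝ) : ℝ :=
  -∑ i ∈ S, (divg E y i ^ 2 / 2 - divg E y i) - ∑ i ∈ Sᶜ, divg E y i ^ 2 / (2 * α)

/-- The boundary of a node set `C`: edges with exactly one endpoint in `C`. -/
def bdry {n : ℕ} (E : Finset (Fin n × Fin n)) (C : Finset (Fin n)) :
    Finset (Fin n × Fin n) :=
  E.filter (fun e => (e.1 ∈ C ∧ e.2 ∉ C) ∨ (e.1 ∉ C ∧ e.2 ∈ C))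

/-! Perturbing `ŷ` on a single edge `(i, j)` by `t` changes the dual objective by
`t (x̃ i - x̃ j) - t² q`, where `x̃ = primalOfFlow ŷ` is the primal point read off from the
divergence of `ŷ` (`x̃ i = 1 - div_i ŷ` on `S`, `-div_i ŷ / α` off `S`). Dual optimality thus
forces `x̃ i = x̃ j` on non-saturated edges and `ŷ e (x̃ i - x̃ j) = λ W e |x̃ i - x̃ j|` on all
edges. Completing squares gives, for every `z`,
`h z = D ŷ + ‖z - x̃‖²_w + ∑ₑ (λ W e |z i - z j| - ŷ e (z i - z j))` with a positive
diagonal weight `w`, so complementary slackness yields `h x̃ = D ŷ ≤ h x̂ - ‖x̂ - x̃‖²_w`,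
whence `x̂ = x̃`. -/

open Filter Topology

lemma nonpos_of_forall_mul_le_sq_mul {g Q ε : ℝ} (hε : 0 < ε)
    (h : ∀ t ∈ Set.Ioc 0 ε, t * g ≤ t ^ 2 * Q) : g ≤ 0 := by
  have hlim : Tendsto (fun t : ℝ => t * Q) (𝓝[>] 0) (𝓝 0) := by
    simpa using ((continuous_mul_const Q).tendsto 0).mono_left nhdsWithin_le_nhds
  refine ge_of_tendsto hlim ?_
  filter_upwards [Ioc_mem_nhdsGT hε] with t ht
  exact le_of_mul_le_mul_left (by simpa [sq, mul_assoc] using h t ht) ht.1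

lemma eq_of_sum_sq_add_sum_mul_sq_nonpos {ι : Type*} [Fintype ι] [DecidableEq ι]
    {s : Finset ι} {a : ℝ} (ha : 0 < a) {f g : ι → ℝ}
    (h : ∑ i ∈ s, (f i - g i) ^ 2 / 2 + ∑ i ∈ sᶜ, a * (f i - g i) ^ 2 / 2 ≤ 0) : f = g := by
  have hs : 0 ≤ ∑ i ∈ s, (f i - g i) ^ 2 / 2 := sum_nonneg fun i _ => by positivity
  have hsc : 0 ≤ ∑ i ∈ sᶜ, a * (f i - g i) ^ 2 / 2 := sum_nonneg fun i _ => by positivity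
  funext i
  suffices (f i - g i) ^ 2 ≤ 0 from
    sub_eq_zero.mp (pow_eq_zero_iff two_ne_zero |>.mp (le_antisymm this (sq_nonneg _)))
  by_cases hi : i ∈ s
  · have := single_le_sum (f := fun i => (f i - g i) ^ 2 / 2) (fun j _ => by positivity) hi
    linarith
  · have := single_le_sum (f := fun i => a * (f i - g i) ^ 2 / 2) (fun j _ => by positivity)
      (mem_compl.mpr hi)
    nlinarith

section Flow

variable {n : ℕ} (E : Finset (Fin n × Fin n))

lemma divg_add_smul (y u : Fin n × Fin n → ℝ) (t : ℝ) (i : Fin n) :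
    divg E (y + t • u) i = divg E y i + t * divg E u i := by
  simp only [divg, Pi.add_apply, Pi.smul_apply, smul_eq_mul, sum_add_distrib, ← mul_sum]
  ring

lemma sum_mul_divg (y : Fin n × Fin n → ℝ) (z : Fin n → ℝ) :
    ∑ i, z i * divg E y i = ∑ e ∈ E, y e * (z e.1 - z e.2) := by
  have fiber (p : Fin n × Fin n → Fin n) :
      ∑ i, ∑ e ∈ E with p e = i, z i * y e = ∑ e ∈ E, z (p e) * y e := by
    rw [← sum_fiberwise E p]
    exact sum_congr rfl fun i _ => sum_congr rfl fun e he => by rw [(mem_filter.mp he).2]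
  simp only [divg, mul_sub, mul_sum]
  rw [sum_sub_distrib, fiber, fiber, ← sum_sub_distrib]
  exact sum_congr rfl fun e _ => by ring

end Flow

section Duality

variable {n : ℕ} (E : Finset (Fin n × Fin n)) (S : Finset (Fin n)) (α : ℝ)

def feasibleFlows (W : Fin n × Fin n → ℝ) (lam : ℝ) : Set (Fin n × Fin n → ℝ) :=
  {y | ∀ e ∈ E, |y e| ≤ lam * W e}

noncomputable def primalOfFlow (y : Fin n × Fin n → ℝ) (i : Fin n) : ℝ :=
  if i ∈ S then 1 - divg E y i else -divg E y i / α

noncomputable def dualQuadraticPart (u : Fin n × Fin n → ℝ) : ℝ :=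
  ∑ i ∈ S, divg E u i ^ 2 / 2 + ∑ i ∈ Sᶜ, divg E u i ^ 2 / (2 * α)

variable {E S α}

lemma dualObj_add_smul (hα : α ≠ 0) (y u : Fin n × Fin n → ℝ) (t : ℝ) :
    dualObj E S α (y + t • u) = dualObj E S α y
      + t * ∑ e ∈ E, u e * (primalOfFlow E S α y e.1 - primalOfFlow E S α y e.2)
      - t ^ 2 * dualQuadraticPart E S α u := by
  set x := primalOfFlow E S α y
  have onS : ∀ i ∈ S, (divg E y i + t * divg E u i) ^ 2 / 2 - (divg E y i + t * divg E u i)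
      = (divg E y i ^ 2 / 2 - divg E y i) - t * (x i * divg E u i)
        + t ^ 2 * (divg E u i ^ 2 / 2) := fun i hi => by
    simp only [x, primalOfFlow, if_pos hi]; ring
  have offS : ∀ i ∈ Sᶜ, (divg E y i + t * divg E u i) ^ 2 / (2 * α)
      = divg E y i ^ 2 / (2 * α) - t * (x i * divg E u i)
        + t ^ 2 * (divg E u i ^ 2 / (2 * α)) := fun i hi => by
    simp only [x, primalOfFlow, if_neg (mem_compl.mp hi)]; field_simp; ring
  rw [← sum_mul_divg, ← sum_add_sum_compl S]
  simp only [dualObj, dualQuadraticPart, divg_add_smul, sum_congr rfl onS, sum_congr rfl offS,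
    sum_add_distrib, sum_sub_distrib, ← mul_sum]
  ring

lemma nLasso_eq_dualObj_add (hα : α ≠ 0) (W : Fin n × Fin n → ℝ) (lam : ℝ)
    (y : Fin n × Fin n → ℝ) (z : Fin n → ℝ) :
    nLasso E W S α lam z = dualObj E S α y
      + (∑ i ∈ S, (z i - primalOfFlow E S α y i) ^ 2 / 2
        + ∑ i ∈ Sᶜ, α * (z i - primalOfFlow E S α y i) ^ 2 / 2)
      + ∑ e ∈ E, (lam * W e * |z e.1 - z e.2| - y e * (z e.1 - z e.2)) := by
  set x := primalOfFlow E S α y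
  have onS : ∀ i ∈ S, (z i - 1) ^ 2 / 2
      = (z i - x i) ^ 2 / 2 - (divg E y i ^ 2 / 2 - divg E y i) - z i * divg E y i :=
    fun i hi => by simp only [x, primalOfFlow, if_pos hi]; ring
  have offS : ∀ i ∈ Sᶜ, α * z i ^ 2 / 2
      = α * (z i - x i) ^ 2 / 2 - divg E y i ^ 2 / (2 * α) - z i * divg E y i :=
    fun i hi => by simp only [x, primalOfFlow, if_neg (mem_compl.mp hi)]; field_simp; ring
  rw [sum_sub_distrib, ← sum_mul_divg, ← sum_add_sum_compl S]
  simp only [nLasso, dualObj, TV, sum_congr rfl onS, sum_congr rfl offS, sum_sub_distrib,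
    mul_sum, mul_assoc]
  ring

end Duality

section Optimality

variable {n : ℕ} {E : Finset (Fin n × Fin n)} {S : Finset (Fin n)} {α : ℝ}
  {W : Fin n × Fin n → ℝ} {lam : ℝ} {yhat : Fin n × Fin n → ℝ}

lemma mul_primalOfFlow_sub_nonpos (hα : α ≠ 0) (hfeas : yhat ∈ feasibleFlows E W lam)
    (hdual : IsMaxOn (dualObj E S α) (feasibleFlows E W lam) yhat)
    {e : Fin n × Fin n} (he : e ∈ E) {s ε : ℝ} (hε : 0 < ε)
    (hline : ∀ t ∈ Set.Ioc 0 ε, |yhat e + t * s| ≤ lam * W e) :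
    s * (primalOfFlow E S α yhat e.1 - primalOfFlow E S α yhat e.2) ≤ 0 := by
  refine nonpos_of_forall_mul_le_sq_mul (Q := dualQuadraticPart E S α (Pi.single e s)) hε
    fun t ht => ?_
  have hmoved : yhat + t • Pi.single e s ∈ feasibleFlows E W lam := by
    intro e' he'
    rcases eq_or_ne e' e with rfl | hne
    · simpa using hline t ht
    · simpa [hne] using hfeas e' he'
  have hle : dualObj E S α _ ≤ dualObj E S α yhat := hdual hmoved
  rw [dualObj_add_smul hα] at hle
  simp only [Pi.single_apply, ite_mul, zero_mul, sum_ite_eq', if_pos he] at hle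
  linarith

lemma primalOfFlow_sub_nonpos_of_lt (hα : α ≠ 0) (hfeas : yhat ∈ feasibleFlows E W lam)
    (hdual : IsMaxOn (dualObj E S α) (feasibleFlows E W lam) yhat)
    {e : Fin n × Fin n} (he : e ∈ E) (hlt : yhat e < lam * W e) :
    primalOfFlow E S α yhat e.1 - primalOfFlow E S α yhat e.2 ≤ 0 := by
  have hlo := (abs_le.mp (hfeas e he)).1
  simpa using mul_primalOfFlow_sub_nonpos (s := 1) hα hfeas hdual he (sub_pos.mpr hlt)
    fun t ht => abs_le.mpr ⟨by linarith [ht.1], by linarith [ht.2]⟩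

lemma primalOfFlow_sub_nonneg_of_neg_lt (hα : α ≠ 0) (hfeas : yhat ∈ feasibleFlows E W lam)
    (hdual : IsMaxOn (dualObj E S α) (feasibleFlows E W lam) yhat)
    {e : Fin n × Fin n} (he : e ∈ E) (hlt : -(lam * W e) < yhat e) :
    0 ≤ primalOfFlow E S α yhat e.1 - primalOfFlow E S α yhat e.2 := by
  have hhi := (abs_le.mp (hfeas e he)).2
  have := mul_primalOfFlow_sub_nonpos (s := -1) hα hfeas hdual he (neg_lt_iff_pos_add.mp hlt)
    fun t ht => abs_le.mpr ⟨by linarith [ht.2], by linarith [ht.1]⟩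
  linarith

lemma primalOfFlow_eq_of_abs_lt (hα : α ≠ 0) (hfeas : yhat ∈ feasibleFlows E W lam)
    (hdual : IsMaxOn (dualObj E S α) (feasibleFlows E W lam) yhat)
    {e : Fin n × Fin n} (he : e ∈ E) (hlt : |yhat e| < lam * W e) :
    primalOfFlow E S α yhat e.1 = primalOfFlow E S α yhat e.2 := by
  obtain ⟨hlo, hhi⟩ := abs_lt.mp hlt
  linarith [primalOfFlow_sub_nonpos_of_lt hα hfeas hdual he hhi,
    primalOfFlow_sub_nonneg_of_neg_lt hα hfeas hdual he hlo]

lemma mul_primalOfFlow_sub_eq (hα : α ≠ 0) (hfeas : yhat ∈ feasibleFlows E W lam)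
    (hdual : IsMaxOn (dualObj E S α) (feasibleFlows E W lam) yhat)
    {e : Fin n × Fin n} (he : e ∈ E) :
    yhat e * (primalOfFlow E S α yhat e.1 - primalOfFlow E S α yhat e.2)
      = lam * W e * |primalOfFlow E S α yhat e.1 - primalOfFlow E S α yhat e.2| := by
  set d := primalOfFlow E S α yhat e.1 - primalOfFlow E S α yhat e.2
  obtain ⟨hlo, hhi⟩ := abs_le.mp (hfeas e he)
  rcases lt_trichotomy d 0 with hd | hd | hd
  · have hsat : yhat e = -(lam * W e) := le_antisymm
      (not_lt.mp fun h => hd.not_ge (primalOfFlow_sub_nonneg_of_neg_lt hα hfeas hdual he h)) hlo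
    rw [hsat, abs_of_neg hd]; ring
  · simp [hd]
  · have hsat : yhat e = lam * W e := le_antisymm hhi
      (not_lt.mp fun h => hd.not_ge (primalOfFlow_sub_nonpos_of_lt hα hfeas hdual he h))
    rw [hsat, abs_of_pos hd]

lemma dualObj_add_le_nLasso (hα : α ≠ 0) {y : Fin n × Fin n → ℝ}
    (hfeas : y ∈ feasibleFlows E W lam) (z : Fin n → ℝ) :
    dualObj E S α y + (∑ i ∈ S, (z i - primalOfFlow E S α y i) ^ 2 / 2
        + ∑ i ∈ Sᶜ, α * (z i - primalOfFlow E S α y i) ^ 2 / 2) ≤ nLasso E W S α lam z := by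
  have hgap : 0 ≤ ∑ e ∈ E, (lam * W e * |z e.1 - z e.2| - y e * (z e.1 - z e.2)) :=
    sum_nonneg fun e he => sub_nonneg.mpr <| (le_abs_self _).trans <| by
      rw [abs_mul]; exact mul_le_mul_of_nonneg_right (hfeas e he) (abs_nonneg _)
  linarith [nLasso_eq_dualObj_add (E := E) (S := S) hα W lam y z]

lemma nLasso_primalOfFlow_eq_dualObj (hα : α ≠ 0) (hfeas : yhat ∈ feasibleFlows E W lam)
    (hdual : IsMaxOn (dualObj E S α) (feasibleFlows E W lam) yhat) :
    nLasso E W S α lam (primalOfFlow E S α yhat) = dualObj E S α yhat := by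
  rw [nLasso_eq_dualObj_add hα W lam yhat]
  set x := primalOfFlow E S α yhat
  have hslack : ∑ e ∈ E, (lam * W e * |x e.1 - x e.2| - yhat e * (x e.1 - x e.2)) = 0 :=
    sum_eq_zero fun e he => by rw [mul_primalOfFlow_sub_eq hα hfeas hdual he, sub_self]
  simp [hslack]

lemma eq_primalOfFlow_of_optimal (hα : 0 < α) {xhat : Fin n → ℝ}
    (hprimal : ∀ z : Fin n → ℝ, nLasso E W S α lam xhat ≤ nLasso E W S α lam z)
    (hfeas : yhat ∈ feasibleFlows E W lam)
    (hdual : IsMaxOn (dualObj E S α) (feasibleFlows E W lam) yhat) :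
    xhat = primalOfFlow E S α yhat := by
  have hstrong := nLasso_primalOfFlow_eq_dualObj hα.ne' hfeas hdual
  have hweak := dualObj_add_le_nLasso (S := S) hα.ne' hfeas xhat
  refine eq_of_sum_sq_add_sum_mul_sq_nonpos (s := S) hα ?_
  linarith [hprimal (primalOfFlow E S α yhat)]

end Optimality

theorem nLasso_optimal_capacity_and_nonsaturated_general
    (n : ℕ) (E : Finset (Fin n × Fin n))
    (W : Fin n × Fin n → ℝ)
    (S : Finset (Fin n))
    (α lam : ℝ) (hα : 0 < α)
    (xhat : Fin n → ℝ) (yhat : Fin n × Fin n → ℝ)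
    (hprimal : ∀ z : Fin n → ℝ, nLasso E W S α lam xhat ≤ nLasso E W S α lam z)
    (hfeas : ∀ e ∈ E, |yhat e| ≤ lam * W e)
    (hdual : ∀ y : Fin n × Fin n → ℝ, (∀ e ∈ E, |y e| ≤ lam * W e) →
      dualObj E S α y ≤ dualObj E S α yhat) :
    (∀ e ∈ E, |yhat e| ≤ lam * W e) ∧
    (∀ e ∈ E, |yhat e| < lam * W e → xhat e.1 = xhat e.2) := by
  refine ⟨hfeas, fun e he hlt => ?_⟩
  have hmax : IsMaxOn (dualObj E S α) (feasibleFlows E W lam) yhat := isMaxOn_iff.mpr hdual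
  rw [eq_primalOfFlow_of_optimal hα hprimal hfeas hmax]
  exact primalOfFlow_eq_of_abs_lt hα.ne' hfeas hmax he hlt

/-- At a primal-dual optimal pair, the capacity constraints hold and the
primal solution is constant across non-saturated edges. -/
theorem nLasso_optimal_capacity_and_nonsaturated
    (n : ℕ) (E : Finset (Fin n × Fin n)) (hE : ∀ e ∈ E, e.1 < e.2)
    (W : Fin n × Fin n → ℝ) (hW : ∀ e ∈ E, 0 < W e)
    (S : Finset (Fin n)) (hS : S.Nonempty)
    (α lam : ℝ) (hα : 0 < α) (hlam : 0 < lam)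
    (xhat : Fin n → ℝ) (yhat : Fin n × Fin n → ℝ)
    (hprimal : ∀ z : Fin n → ℝ, nLasso E W S α lam xhat ≤ nLasso E W S α lam z)
    (hfeas : ∀ e ∈ E, |yhat e| ≤ lam * W e)
    (hdual : ∀ y : Fin n × Fin n → ℝ, (∀ e ∈ E, |y e| ≤ lam * W e) →
      dualObj E S α y ≤ dualObj E S α yhat) :
    (∀ e ∈ E, |yhat e| ≤ lam * W e) ∧
    (∀ e ∈ E, |yhat e| < lam * W e → xhat e.1 = xhat e.2) :=
  nLasso_optimal_capacity_and_nonsaturated_general n E W S α lam hα xhat yhat hprimal hfeas hdual
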